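/- arXiv:math/0006129 — 6 statements merged into one kernel-verified Lean document; each statement's English description precedes it below -/
import Mathlib

section
/- Let x(s,t) = Σ_{i,j=1}^N a_{i,j} r_i(s) r_j(t) be a finite double Rademacher sum on the unit square, where r_k(t) = sign(sin(2^{k-1}πt)) are the Rademacher functions. Then for every q ≥ 1, the L^q norm of x on [0,1]² satisfies ‖x‖_q ≤ q·(Σ_{i,j} a_{i,j}²)^{1/2}. -/
open MeasureTheory Real Set

/-- Rademacher function `r_k(t) = sign (sin (2^(k-1) π t))`. -/
noncomputable def rad (k : ℕ) (t : ℝ) : ℝ :=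
  Real.sign (Real.sin (2 ^ (k - 1) * Real.pi * t))

/-- Lebesgue measure on the unit square `[0,1]²`. -/
noncomputable def μsq : Measure (ℝ × ℝ) :=
  (volume.restrict (Set.Icc (0:ℝ) 1)).prod (volume.restrict (Set.Icc (0:ℝ) 1))

/-!
On each dyadic interval of length `2⁻ᴺ` the functions `r_1, …, r_N` are constant, `r_j` being
the sign of a bit of the interval's index, so `‖x‖_q^q` is the average over `k, l < 2ᴺ` of
`|X k l|^q` with `X k l = ∑ a_{ij} ε_i(k) ε_j(l)`. Choose `m ∈ ℕ` with `q ≤ 2m` and `m ≤ q`.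
Power means increase, so `‖X‖_q ≤ ‖X‖_{2m}`. Khintchine's inequality
`𝔼 (∑ c_j ε_j)^{2m} ≤ (2m-1)‼ (∑ c_j²)^m`, proved by adding one sign at a time (the odd terms of
the binomial expansion average to zero by symmetry), applied in `l`, then Minkowski's inequality
in `L^m` over `k`, then Khintchine again in `k`, give `𝔼 X^{2m} ≤ ((2m-1)‼)² (∑ a_{ij}²)^m`.
Finally `((2m-1)‼)² ≤ m^{2m}`, whence `‖x‖_q ≤ m ‖a‖₂ ≤ q ‖a‖₂`.
-/

open Finset Function
open scoped Nat BigOperators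

namespace Nat

theorem factorial_two_mul_eq_mul_doubleFactorial (n : ℕ) :
    (2 * n)! = 2 ^ n * n ! * (2 * n - 1)‼ := by
  rcases n.eq_zero_or_pos with rfl | hn
  · rfl
  · obtain ⟨k, hk⟩ : ∃ k, 2 * n = k + 1 := ⟨2 * n - 1, by omega⟩
    rw [hk, factorial_eq_mul_doubleFactorial, ← hk, doubleFactorial_two_mul, hk,
      Nat.add_sub_cancel]

theorem choose_two_mul_mul_doubleFactorial {u m : ℕ} (h : u ≤ m) :
    (2 * m).choose (2 * u) * ((2 * u - 1)‼ * (2 * (m - u) - 1)‼) = m.choose u * (2 * m - 1)‼ := by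
  refine Nat.eq_of_mul_eq_mul_right (show 0 < 2 ^ m * (u ! * (m - u)!) by positivity) ?_
  have h2 : 2 * m - 2 * u = 2 * (m - u) := by omega
  have hpow : 2 ^ m = 2 ^ u * 2 ^ (m - u) := by rw [← pow_add, Nat.add_sub_cancel' h]
  calc (2 * m).choose (2 * u) * ((2 * u - 1)‼ * (2 * (m - u) - 1)‼) * (2 ^ m * (u ! * (m - u)!))
      = (2 * m).choose (2 * u) * (2 * u)! * (2 * m - 2 * u)! := by
        rw [h2, factorial_two_mul_eq_mul_doubleFactorial,
          factorial_two_mul_eq_mul_doubleFactorial, hpow]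
        ring
    _ = 2 ^ m * (m.choose u * u ! * (m - u)!) * (2 * m - 1)‼ := by
        rw [choose_mul_factorial_mul_factorial (by omega), choose_mul_factorial_mul_factorial h,
          factorial_two_mul_eq_mul_doubleFactorial]
    _ = m.choose u * (2 * m - 1)‼ * (2 ^ m * (u ! * (m - u)!)) := by ring

theorem choose_two_mul_mul_doubleFactorial_le {u m : ℕ} (h : u ≤ m) :
    (2 * m).choose (2 * u) * (2 * u - 1)‼ ≤ m.choose u * (2 * m - 1)‼ := by
  rw [← choose_two_mul_mul_doubleFactorial h, ← mul_assoc]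
  exact Nat.le_mul_of_pos_right _ (doubleFactorial_pos _)

theorem doubleFactorial_two_mul_sub_one_eq_prod (m : ℕ) :
    (2 * m - 1)‼ = ∏ i ∈ range m, (2 * i + 1) := by
  cases m with
  | zero => rfl
  | succ m => rw [prod_range_succ', show 2 * (m + 1) - 1 = 2 * m + 1 by omega,
      doubleFactorial_eq_prod_odd]; simp

/-- Pairing the factors `2i+1` and `2(m-1-i)+1`, whose product is at most `m²`. -/
theorem doubleFactorial_two_mul_sub_one_sq_le (m : ℕ) : ((2 * m - 1)‼) ^ 2 ≤ m ^ (2 * m) := by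
  rw [doubleFactorial_two_mul_sub_one_eq_prod, sq]
  nth_rw 2 [← prod_range_reflect]
  rw [← prod_mul_distrib, pow_mul]
  refine (prod_le_pow_card _ _ (m ^ 2) fun i hi => ?_).trans_eq (by rw [card_range])
  have hi : i < m := mem_range.1 hi
  obtain ⟨j, rfl⟩ : ∃ j, m = i + 1 + j := ⟨m - 1 - i, by omega⟩
  rw [show i + 1 + j - 1 - i = j by omega]
  nlinarith [sq_nonneg ((i : ℤ) - j)]

end Nat

namespace Finset

theorem sum_range_two_mul_add_one_eq_of_odd {M : Type*} [AddCommMonoid M] (n : ℕ) (f : ℕ → M)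
    (h : ∀ r < 2 * n + 1, Odd r → f r = 0) :
    ∑ r ∈ range (2 * n + 1), f r = ∑ u ∈ range (n + 1), f (2 * u) := by
  rw [← sum_image (g := (2 * ·)) fun _ _ _ _ huv => by simpa using huv]
  refine (sum_subset (fun r => by simp only [mem_image, mem_range]; omega) fun r hr hr' => ?_).symm
  refine h r (mem_range.1 hr) (Nat.not_even_iff_odd.1 fun ⟨u, hu⟩ => hr' ?_)
  exact mem_image.2 ⟨u, mem_range.2 (by have := mem_range.1 hr; omega), by omega⟩

variable {α : Type*} {K : Finset α}

theorem expect_eq_zero_of_involutive {σ : α → α} (hσ : Involutive σ) (hK : Set.MapsTo σ K K)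
    {F : α → ℝ} (hF : ∀ k ∈ K, F (σ k) = -F k) : 𝔼 k ∈ K, F k = 0 := by
  have h : 𝔼 k ∈ K, F (σ k) = 𝔼 k ∈ K, F k :=
    expect_nbij' σ σ hK hK (fun k _ => hσ k) (fun k _ => hσ k) fun _ _ => rfl
  rw [expect_congr rfl hF, expect_neg_distrib] at h
  linarith

theorem expect_add_mul_sign_pow_le {σ : α → α} (hσ : Involutive σ) (hK : Set.MapsTo σ K K)
    {Y ε : α → ℝ} (hY : ∀ k ∈ K, Y (σ k) = Y k) (hε : ∀ k ∈ K, ε (σ k) = -ε k)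
    (hε2 : ∀ k ∈ K, ε k ^ 2 = 1) {B : ℝ} (hB : 0 ≤ B) {m : ℕ}
    (hmom : ∀ u ≤ m, 𝔼 k ∈ K, Y k ^ (2 * u) ≤ (2 * u - 1)‼ * B ^ u) (c : ℝ) :
    𝔼 k ∈ K, (Y k + c * ε k) ^ (2 * m) ≤ (2 * m - 1)‼ * (B + c ^ 2) ^ m := by
  have hodd : ∀ r < 2 * m + 1, Odd r →
      𝔼 k ∈ K, Y k ^ r * (c * ε k) ^ (2 * m - r) * ((2 * m).choose r : ℝ) = 0 := by
    intro r hr ⟨v, hv⟩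
    refine expect_eq_zero_of_involutive hσ hK fun k hk => ?_
    have : Odd (2 * m - r) := ⟨m - v - 1, by omega⟩
    rw [hY k hk, hε k hk, mul_neg, this.neg_pow]
    ring
  have heven : ∀ u ∈ range (m + 1),
      𝔼 k ∈ K, Y k ^ (2 * u) * (c * ε k) ^ (2 * m - 2 * u) * ((2 * m).choose (2 * u) : ℝ)
        = (2 * m).choose (2 * u) * (c ^ 2) ^ (m - u) * 𝔼 k ∈ K, Y k ^ (2 * u) := by
    intro u hu
    rw [mul_expect]
    refine expect_congr rfl fun k hk => ?_
    rw [show 2 * m - 2 * u = 2 * (m - u) by omega, mul_pow, pow_mul c, pow_mul (ε k), hε2 k hk]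
    ring
  calc 𝔼 k ∈ K, (Y k + c * ε k) ^ (2 * m)
      = ∑ r ∈ range (2 * m + 1),
          𝔼 k ∈ K, Y k ^ r * (c * ε k) ^ (2 * m - r) * ((2 * m).choose r : ℝ) := by
        simp_rw [add_pow]; exact expect_sum_comm _ _ _
    _ = ∑ u ∈ range (m + 1), (2 * m).choose (2 * u) * (c ^ 2) ^ (m - u) *
          𝔼 k ∈ K, Y k ^ (2 * u) := by
        rw [sum_range_two_mul_add_one_eq_of_odd _ _ hodd]; exact sum_congr rfl heven
    _ ≤ ∑ u ∈ range (m + 1), (2 * m).choose (2 * u) * (c ^ 2) ^ (m - u) *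
          ((2 * u - 1)‼ * B ^ u) := by
        gcongr with u hu; exact hmom u (by have := mem_range.1 hu; omega)
    _ ≤ ∑ u ∈ range (m + 1), (2 * m - 1)‼ * (B ^ u * (c ^ 2) ^ (m - u) * m.choose u) := by
        refine sum_le_sum fun u hu => ?_
        have h := Nat.choose_two_mul_mul_doubleFactorial_le (Nat.lt_succ_iff.1 (mem_range.1 hu))
        calc _ = ((2 * m).choose (2 * u) * (2 * u - 1)‼ : ℕ) * (B ^ u * (c ^ 2) ^ (m - u)) := by
              push_cast; ring
          _ ≤ (m.choose u * (2 * m - 1)‼ : ℕ) * (B ^ u * (c ^ 2) ^ (m - u)) := by gcongr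
          _ = _ := by push_cast; ring
    _ = (2 * m - 1)‼ * (B + c ^ 2) ^ m := by rw [add_pow, mul_sum]

/-- **Khintchine's inequality**, with the constants `(2m-1)‼` of the Gaussian moments, for signs
that can be reversed one at a time by involutions of `K`. -/
theorem expect_pow_le_of_involutive_signs {ι : Type*} (s : Finset ι)
    (ε : ι → α → ℝ) (hε2 : ∀ j ∈ s, ∀ k ∈ K, ε j k ^ 2 = 1)
    (hflip : ∀ j ∈ s, ∃ σ : α → α, Involutive σ ∧ Set.MapsTo σ K K ∧
      ∀ k ∈ K, ε j (σ k) = -ε j k ∧ ∀ i ∈ s, i ≠ j → ε i (σ k) = ε i k)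
    (m : ℕ) (c₀ : ℝ) (c : ι → ℝ) :
    𝔼 k ∈ K, (c₀ + ∑ j ∈ s, c j * ε j k) ^ (2 * m)
      ≤ (2 * m - 1)‼ * (c₀ ^ 2 + ∑ j ∈ s, c j ^ 2) ^ m := by
  classical
  induction s using Finset.induction_on generalizing m with
  | empty =>
    rcases K.eq_empty_or_nonempty with rfl | hK
    · simp only [expect_empty]; positivity
    · simp only [sum_empty, add_zero, expect_const hK, ← pow_mul]
      exact le_mul_of_one_le_left ((even_two_mul m).pow_nonneg c₀)
        (by exact_mod_cast Nat.doubleFactorial_pos _)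
  | insert j s hj ih =>
    obtain ⟨σ, hσ, hK, hflipj⟩ := hflip j (mem_insert_self j s)
    have ih' := ih (fun i hi => hε2 i (mem_insert_of_mem hi)) (fun i hi => by
      obtain ⟨τ, hτ, hKτ, h⟩ := hflip i (mem_insert_of_mem hi)
      exact ⟨τ, hτ, hKτ, fun k hk => ⟨(h k hk).1,
        fun l hl => (h k hk).2 l (mem_insert_of_mem hl)⟩⟩)
    have hY : ∀ k ∈ K, c₀ + ∑ i ∈ s, c i * ε i (σ k) = c₀ + ∑ i ∈ s, c i * ε i k :=
      fun k hk => by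
        rw [sum_congr rfl fun i hi => by
          rw [(hflipj k hk).2 i (mem_insert_of_mem hi) (ne_of_mem_of_not_mem hi hj)]]
    have h := expect_add_mul_sign_pow_le hσ hK hY (fun k hk => (hflipj k hk).1)
      (hε2 j (mem_insert_self j s)) (B := c₀ ^ 2 + ∑ i ∈ s, c i ^ 2) (by positivity)
      (m := m) (fun u _ => ih' u) (c j)
    simp_rw [sum_insert hj]
    convert h using 3 <;> ring

end Finset

namespace Real
variable {ι : Type*} (s : Finset ι)

theorem rpow_expect_le_expect_rpow {f : ι → ℝ} (hf : ∀ i ∈ s, 0 ≤ f i) {p : ℝ} (hp : 1 ≤ p) :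
    (𝔼 i ∈ s, f i) ^ p ≤ 𝔼 i ∈ s, f i ^ p := by
  rcases s.eq_empty_or_nonempty with rfl | hs
  · simp [zero_rpow (by positivity : p ≠ 0)]
  have hw : ∑ _i ∈ s, ((#s : ℝ))⁻¹ = 1 := by
    rw [sum_const, nsmul_eq_mul, mul_inv_cancel₀ (by simpa using hs.ne_empty)]
  simp only [expect_eq_sum_div_card, div_eq_inv_mul, mul_sum]
  exact rpow_arith_mean_le_arith_mean_rpow s _ f (fun _ _ => by positivity) hw hf hp

theorem expect_rpow_rpow_inv_le {f : ι → ℝ} (hf : ∀ i ∈ s, 0 ≤ f i) {p q : ℝ} (hq : 0 < q)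
    (hqp : q ≤ p) : (𝔼 i ∈ s, f i ^ q) ^ q⁻¹ ≤ (𝔼 i ∈ s, f i ^ p) ^ p⁻¹ := by
  have hp : 0 < p := hq.trans_le hqp
  have hE : 0 ≤ 𝔼 i ∈ s, f i ^ q := expect_nonneg fun i hi => rpow_nonneg (hf i hi) q
  calc (𝔼 i ∈ s, f i ^ q) ^ q⁻¹ = ((𝔼 i ∈ s, f i ^ q) ^ (p / q)) ^ p⁻¹ := by
        rw [← rpow_mul hE]; field_simp
    _ ≤ (𝔼 i ∈ s, (f i ^ q) ^ (p / q)) ^ p⁻¹ := by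
        gcongr
        exact rpow_expect_le_expect_rpow s (fun i hi => rpow_nonneg (hf i hi) q)
          ((one_le_div hq).2 hqp)
    _ = (𝔼 i ∈ s, f i ^ p) ^ p⁻¹ := by
        congr 1
        refine expect_congr rfl fun i hi => ?_
        rw [← rpow_mul (hf i hi)]; field_simp

theorem expect_abs_rpow_rpow_inv_le_of_pow_le {f : ι → ℝ} {q C : ℝ} {m : ℕ} (hq : 0 < q)
    (hqm : q ≤ 2 * m) (hC : 0 ≤ C) (h : 𝔼 i ∈ s, f i ^ (2 * m) ≤ C ^ (2 * m)) :
    (𝔼 i ∈ s, |f i| ^ q) ^ q⁻¹ ≤ C := by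
  have hm : 2 * m ≠ 0 := by exact_mod_cast (hq.trans_le hqm).ne'
  calc (𝔼 i ∈ s, |f i| ^ q) ^ q⁻¹
      ≤ (𝔼 i ∈ s, |f i| ^ ((2 * m : ℕ) : ℝ)) ^ ((2 * m : ℕ) : ℝ)⁻¹ :=
        expect_rpow_rpow_inv_le s (fun i _ => abs_nonneg (f i)) hq (by push_cast; exact hqm)
    _ ≤ (C ^ (2 * m)) ^ ((2 * m : ℕ) : ℝ)⁻¹ := by
        gcongr; simpa only [rpow_natCast, (even_two_mul m).pow_abs] using h
    _ = C := pow_rpow_inv_natCast hC hm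

theorem expect_add_rpow_le {f g : ι → ℝ} (hf : ∀ i ∈ s, 0 ≤ f i) (hg : ∀ i ∈ s, 0 ≤ g i)
    {p : ℝ} (hp : 1 ≤ p) :
    (𝔼 i ∈ s, (f i + g i) ^ p) ^ (1 / p)
      ≤ (𝔼 i ∈ s, f i ^ p) ^ (1 / p) + (𝔼 i ∈ s, g i ^ p) ^ (1 / p) := by
  have hsum : ∀ h : ι → ℝ, (∀ i ∈ s, 0 ≤ h i) → 0 ≤ ∑ i ∈ s, h i ^ p :=
    fun h hh => sum_nonneg fun i hi => rpow_nonneg (hh i hi) p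
  simp only [expect_eq_sum_div_card]
  rw [div_rpow (hsum _ fun i hi => add_nonneg (hf i hi) (hg i hi)) (by positivity),
    div_rpow (hsum f hf) (by positivity), div_rpow (hsum g hg) (by positivity), ← add_div]
  gcongr
  exact Lp_add_le_of_nonneg s hp hf hg

theorem expect_sum_rpow_le {κ : Type*} (t : Finset κ) {g : κ → ι → ℝ}
    (hg : ∀ j ∈ t, ∀ i ∈ s, 0 ≤ g j i) {p : ℝ} (hp : 1 ≤ p) :
    (𝔼 i ∈ s, (∑ j ∈ t, g j i) ^ p) ^ (1 / p) ≤ ∑ j ∈ t, (𝔼 i ∈ s, g j i ^ p) ^ (1 / p) := by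
  classical
  induction t using Finset.induction_on with
  | empty => simp [zero_rpow (by positivity : p ≠ 0), zero_rpow (by positivity : p⁻¹ ≠ 0)]
  | insert j t hj ih =>
    simp only [sum_insert hj]
    refine (expect_add_rpow_le s (hg j (mem_insert_self j t))
      (fun i hi => sum_nonneg fun l hl => hg l (mem_insert_of_mem hl) i hi) hp).trans ?_
    gcongr
    exact ih fun l hl => hg l (mem_insert_of_mem hl)

theorem expect_sum_pow_le {κ : Type*} (t : Finset κ) {g : κ → ι → ℝ}
    (hg : ∀ j ∈ t, ∀ i ∈ s, 0 ≤ g j i) {m : ℕ} (hm : m ≠ 0) {C : ℝ} (hC : 0 ≤ C) {B : κ → ℝ}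
    (hB : ∀ j ∈ t, 0 ≤ B j) (h : ∀ j ∈ t, 𝔼 i ∈ s, g j i ^ m ≤ C * B j ^ m) :
    𝔼 i ∈ s, (∑ j ∈ t, g j i) ^ m ≤ C * (∑ j ∈ t, B j) ^ m := by
  have hm' : (1 : ℝ) ≤ m := by exact_mod_cast Nat.one_le_iff_ne_zero.2 hm
  have hroot : ∀ {x y : ℝ}, 0 ≤ x → 0 ≤ y →
      (x ^ (m⁻¹ : ℝ) ≤ C ^ (m⁻¹ : ℝ) * y ↔ x ≤ C * y ^ m) := fun hx hy => by
    rw [rpow_inv_le_iff_of_pos hx (by positivity) (by positivity), rpow_natCast, mul_pow,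
      rpow_inv_natCast_pow hC hm]
  have key := expect_sum_rpow_le s t hg hm'
  simp only [rpow_natCast, one_div] at key
  refine (hroot (expect_nonneg fun i hi => pow_nonneg (sum_nonneg fun j hj => hg j hj i hi) m)
    (sum_nonneg hB)).1 (key.trans ?_)
  rw [mul_sum]
  exact sum_le_sum fun j hj =>
    (hroot (expect_nonneg fun i hi => pow_nonneg (hg j hj i hi) m) (hB j hj)).2 (h j hj)

end Real

namespace Finset

theorem expect_expect_bilinear_pow_le {α ι : Type*} (K : Finset α) (s : Finset ι)
    (ε : ι → α → ℝ) {m : ℕ} (hm : m ≠ 0) {C : ℝ} (hC : 0 ≤ C)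
    (hkh : ∀ c : ι → ℝ, 𝔼 k ∈ K, (∑ i ∈ s, c i * ε i k) ^ (2 * m) ≤ C * (∑ i ∈ s, c i ^ 2) ^ m)
    (a : ι → ι → ℝ) :
    𝔼 k ∈ K, 𝔼 l ∈ K, (∑ i ∈ s, ∑ j ∈ s, a i j * ε i k * ε j l) ^ (2 * m)
      ≤ C ^ 2 * (∑ i ∈ s, ∑ j ∈ s, a i j ^ 2) ^ m := by
  have hrow : ∀ k l, ∑ i ∈ s, ∑ j ∈ s, a i j * ε i k * ε j l
      = ∑ j ∈ s, (∑ i ∈ s, a i j * ε i k) * ε j l := fun k l => by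
    rw [sum_comm]; simp_rw [sum_mul]
  calc 𝔼 k ∈ K, 𝔼 l ∈ K, (∑ i ∈ s, ∑ j ∈ s, a i j * ε i k * ε j l) ^ (2 * m)
      ≤ 𝔼 k ∈ K, C * (∑ j ∈ s, (∑ i ∈ s, a i j * ε i k) ^ 2) ^ m :=
        expect_le_expect fun k _ => by simp_rw [hrow]; exact hkh _
    _ = C * 𝔼 k ∈ K, (∑ j ∈ s, (∑ i ∈ s, a i j * ε i k) ^ 2) ^ m := (mul_expect ..).symm
    _ ≤ C * (C * (∑ j ∈ s, ∑ i ∈ s, a i j ^ 2) ^ m) := by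
        gcongr
        refine Real.expect_sum_pow_le K s (fun _ _ _ _ => sq_nonneg _) hm hC
          (fun j _ => sum_nonneg fun i _ => sq_nonneg (a i j)) fun j _ => ?_
        simp_rw [← pow_mul]
        exact hkh _
    _ = C ^ 2 * (∑ i ∈ s, ∑ j ∈ s, a i j ^ 2) ^ m := by rw [sum_comm]; ring

end Finset

/-- The value of `rad j` on the dyadic interval `(k / 2^N, (k + 1) / 2^N)`, for `1 ≤ j ≤ N + 1`:
the sign of the bit of `k` in position `N + 1 - j`. -/
noncomputable def dyadicSign (N j k : ℕ) : ℝ := (-1) ^ (k / 2 ^ (N + 1 - j))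

theorem dyadicSign_eq_ite (N j k : ℕ) :
    dyadicSign N j k = if k.testBit (N + 1 - j) then -1 else 1 := by
  rw [dyadicSign, neg_one_pow_eq_pow_mod_two, Nat.testBit_eq_decide_div_mod_eq]
  rcases Nat.mod_two_eq_zero_or_one (k / 2 ^ (N + 1 - j)) with h | h <;> simp [h]

theorem dyadicSign_sq (N j k : ℕ) : dyadicSign N j k ^ 2 = 1 := by
  rw [dyadicSign_eq_ite]; split_ifs <;> norm_num

theorem dyadicSign_one {N k : ℕ} (hk : k < 2 ^ N) : dyadicSign N 1 k = 1 := by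
  simp [dyadicSign, Nat.div_eq_of_lt hk]

theorem dyadicSign_xor_self (N j k : ℕ) :
    dyadicSign N j (k ^^^ 2 ^ (N + 1 - j)) = -dyadicSign N j k := by
  simp only [dyadicSign_eq_ite, Nat.testBit_xor, Nat.testBit_two_pow_self]
  cases k.testBit (N + 1 - j) <;> simp

theorem dyadicSign_xor_of_ne {N i j : ℕ} (hi : i ≤ N + 1) (hj : j ≤ N + 1) (hij : i ≠ j)
    (k : ℕ) : dyadicSign N i (k ^^^ 2 ^ (N + 1 - j)) = dyadicSign N i k := by
  simp only [dyadicSign_eq_ite, Nat.testBit_xor,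
    Nat.testBit_two_pow_of_ne (show N + 1 - j ≠ N + 1 - i by omega), Bool.xor_false]

theorem expect_dyadicSign_pow_le (N m : ℕ) (c : ℕ → ℝ) :
    𝔼 k ∈ range (2 ^ N), (∑ j ∈ Icc 1 N, c j * dyadicSign N j k) ^ (2 * m)
      ≤ (2 * m - 1)‼ * (∑ j ∈ Icc 1 N, c j ^ 2) ^ m := by
  cases N with
  | zero =>
    simpa using expect_pow_le_of_involutive_signs (K := range 1) ∅ (dyadicSign 0) (by simp)
      (by simp) m 0 c
  | succ n =>
    have hIcc : Finset.Icc 1 (n + 1) = insert 1 (Finset.Icc 2 (n + 1)) := by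
      ext j; simp only [Finset.mem_Icc, Finset.mem_insert]; omega
    have h := expect_pow_le_of_involutive_signs (K := range (2 ^ (n + 1))) (Icc 2 (n + 1))
      (dyadicSign (n + 1)) (fun j _ k _ => dyadicSign_sq _ j k) (fun j hj => ?_) m (c 1) c
    · rw [hIcc, sum_insert (by simp)]
      refine (expect_le_expect fun k hk => ?_).trans h
      rw [sum_insert (by simp), dyadicSign_one (mem_range.1 hk), mul_one]
    · have hj := Finset.mem_Icc.1 hj
      refine ⟨(· ^^^ 2 ^ (n + 2 - j)), fun k => Nat.xor_xor_cancel_right .., fun k hk => ?_,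
        fun k _ => ⟨dyadicSign_xor_self .., fun i hi hij => ?_⟩⟩
      · exact mem_range.2 (Nat.xor_lt_two_pow (mem_range.1 hk)
          (Nat.pow_lt_pow_right (by norm_num) (by omega)))
      · exact dyadicSign_xor_of_ne (by have := Finset.mem_Icc.1 hi; omega) (by omega) hij k

theorem expect_expect_dyadicSign_bilinear_pow_le (N : ℕ) (a : ℕ → ℕ → ℝ) {m : ℕ} (hm : m ≠ 0) :
    𝔼 k ∈ range (2 ^ N), 𝔼 l ∈ range (2 ^ N), (∑ i ∈ Finset.Icc 1 N, ∑ j ∈ Finset.Icc 1 N,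
        a i j * dyadicSign N i k * dyadicSign N j l) ^ (2 * m)
      ≤ (m * √(∑ i ∈ Finset.Icc 1 N, ∑ j ∈ Finset.Icc 1 N, a i j ^ 2)) ^ (2 * m) := by
  calc _ ≤ ((2 * m - 1)‼ : ℝ) ^ 2 * (∑ i ∈ Finset.Icc 1 N, ∑ j ∈ Finset.Icc 1 N, a i j ^ 2) ^ m :=
        expect_expect_bilinear_pow_le _ _ _ hm (by positivity) (expect_dyadicSign_pow_le N m) a
    _ ≤ (m : ℝ) ^ (2 * m) * (∑ i ∈ Finset.Icc 1 N, ∑ j ∈ Finset.Icc 1 N, a i j ^ 2) ^ m := by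
        gcongr; exact_mod_cast Nat.doubleFactorial_two_mul_sub_one_sq_le m
    _ = _ := by rw [mul_pow, pow_mul √_, sq_sqrt (by positivity)]

theorem Real.sign_sin_pi_mul_of_mem_Ioo {Q : ℕ} {u : ℝ} (hu : u ∈ Ioo (Q : ℝ) (Q + 1)) :
    Real.sign (sin (π * u)) = (-1) ^ Q := by
  have hpos : 0 < sin (π * (u - Q)) :=
    sin_pos_of_pos_of_lt_pi (by nlinarith [pi_pos, hu.1]) (by nlinarith [pi_pos, hu.2])
  rw [show π * u = π * (u - Q) + Q * π by ring, sin_add_nat_mul_pi]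
  rcases Nat.even_or_odd Q with hQ | hQ
  · rw [hQ.neg_one_pow, one_mul, Real.sign_of_pos hpos]
  · rw [hQ.neg_one_pow, neg_one_mul, Real.sign_of_neg (neg_lt_zero.2 hpos)]

theorem rad_eq_dyadicSign {N j k : ℕ} (hj : 1 ≤ j) (hjN : j ≤ N + 1) {t : ℝ}
    (ht : t ∈ Ioo ((k : ℝ) / 2 ^ N) ((k + 1) / 2 ^ N)) : rad j t = dyadicSign N j k := by
  set b := N + 1 - j
  have h2N : (2 : ℝ) ^ N = 2 ^ (j - 1) * 2 ^ b := by rw [← pow_add]; congr 1; omega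
  have hscale : ∀ x : ℝ, 2 ^ (j - 1) * (x / 2 ^ N) = x / 2 ^ b := fun x => by
    rw [h2N]; field_simp
  have hQ : ((k / 2 ^ b : ℕ) : ℝ) ≤ k / 2 ^ b := by exact_mod_cast Nat.cast_div_le
  have hQ' : ((k : ℝ) + 1) / 2 ^ b ≤ (k / 2 ^ b : ℕ) + 1 := by
    have h := Nat.lt_mul_div_succ k (by positivity : 0 < 2 ^ b)
    rw [div_le_iff₀ (by positivity)]
    exact_mod_cast (show k + 1 ≤ (k / 2 ^ b + 1) * 2 ^ b by rw [mul_comm]; exact h)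
  have hu : 2 ^ (j - 1) * t ∈ Ioo ((k / 2 ^ b : ℕ) : ℝ) ((k / 2 ^ b : ℕ) + 1) := by
    constructor
    · refine hQ.trans_lt ?_
      rw [← hscale]; exact mul_lt_mul_of_pos_left ht.1 (by positivity)
    · refine lt_of_lt_of_le ?_ hQ'
      rw [← hscale]; exact mul_lt_mul_of_pos_left ht.2 (by positivity)
  rw [rad, show 2 ^ (j - 1) * π * t = π * (2 ^ (j - 1) * t) by ring]
  exact Real.sign_sin_pi_mul_of_mem_Ioo hu

theorem intervalIntegrable_and_integral_eq_of_eqOn_Ioo {f : ℝ → ℝ} {a b c : ℝ} (hab : a ≤ b)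
    (h : EqOn f (fun _ => c) (Ioo a b)) :
    IntervalIntegrable f volume a b ∧ ∫ x in a..b, f x = (b - a) * c := by
  refine ⟨(intervalIntegrable_iff_integrableOn_Ioo_of_le hab).2
    ((integrableOn_const measure_Ioo_lt_top.ne).congr_fun h.symm measurableSet_Ioo), ?_⟩
  rw [intervalIntegral.integral_of_le hab, integral_Ioc_eq_integral_Ioo,
    setIntegral_congr_fun measurableSet_Ioo h, setIntegral_const, measureReal_def,
    Real.volume_Ioo, ENNReal.toReal_ofReal (sub_nonneg.2 hab), smul_eq_mul]

theorem integral_Icc_eq_expect_of_eqOn_dyadic (N : ℕ) {f : ℝ → ℝ} {g : ℕ → ℝ}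
    (h : ∀ k < 2 ^ N, EqOn f (fun _ => g k) (Ioo ((k : ℝ) / 2 ^ N) ((k + 1) / 2 ^ N))) :
    ∫ t in Icc 0 1, f t = 𝔼 k ∈ range (2 ^ N), g k := by
  set a : ℕ → ℝ := fun k => k / 2 ^ N
  have hpiece : ∀ k < 2 ^ N, IntervalIntegrable f volume (a k) (a (k + 1)) ∧
      ∫ x in a k..a (k + 1), f x = (2 ^ N)⁻¹ * g k := fun k hk => by
    have := intervalIntegrable_and_integral_eq_of_eqOn_Ioo (a := a k) (b := a (k + 1))
      (by simp only [a]; gcongr; simp) (by simpa [a] using h k hk)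
    refine ⟨this.1, this.2.trans ?_⟩
    simp only [a]; push_cast; ring
  have ha : a (2 ^ N) = 1 := by simp [a]
  rw [integral_Icc_eq_integral_Ioc, ← intervalIntegral.integral_of_le zero_le_one,
    ← ha, show (0 : ℝ) = a 0 by simp [a],
    ← intervalIntegral.sum_integral_adjacent_intervals fun k hk => (hpiece k hk).1,
    sum_congr rfl fun k hk => (hpiece k (mem_range.1 hk)).2, ← mul_sum, expect_eq_sum_div_card]
  simp [div_eq_inv_mul]

theorem integral_integral_rademacher_eq_expect (N : ℕ) (F : ℝ → ℝ) (a : ℕ → ℕ → ℝ) :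
    ∫ s in Icc 0 1, ∫ t in Icc 0 1,
        F (∑ i ∈ Finset.Icc 1 N, ∑ j ∈ Finset.Icc 1 N, a i j * rad i s * rad j t)
      = 𝔼 k ∈ range (2 ^ N), 𝔼 l ∈ range (2 ^ N),
        F (∑ i ∈ Finset.Icc 1 N, ∑ j ∈ Finset.Icc 1 N,
          a i j * dyadicSign N i k * dyadicSign N j l) := by
  have hrad : ∀ {k : ℕ} {t : ℝ}, t ∈ Ioo ((k : ℝ) / 2 ^ N) ((k + 1) / 2 ^ N) →
      ∀ i ∈ Finset.Icc 1 N, rad i t = dyadicSign N i k := fun ht i hi => by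
    have := Finset.mem_Icc.1 hi
    exact rad_eq_dyadicSign this.1 (by omega) ht
  refine integral_Icc_eq_expect_of_eqOn_dyadic N fun k _ s hs => ?_
  refine integral_Icc_eq_expect_of_eqOn_dyadic N fun l _ t ht => congrArg F ?_
  refine sum_congr rfl fun i hi => sum_congr rfl fun j hj => ?_
  rw [hrad hs i hi, hrad ht j hj]

theorem exists_nat_ne_zero_half_le_le {q : ℝ} (hq : 1 ≤ q) :
    ∃ m : ℕ, m ≠ 0 ∧ q / 2 ≤ m ∧ (m : ℝ) ≤ q := by
  refine ⟨⌈q / 2⌉₊, by positivity, Nat.le_ceil _, ?_⟩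
  rcases le_or_gt q 2 with h | h
  · exact (Nat.cast_le.2 (Nat.ceil_le.2 (by linarith : q / 2 ≤ (1 : ℕ)))).trans (by simpa)
  · linarith [Nat.ceil_lt_add_one (by linarith : 0 ≤ q / 2)]

/-- For a finite double Rademacher sum `x(s,t) = Σ_{i,j=1}^N a_{i,j} r_i(s) r_j(t)` and
every `q ≥ 1`, one has `‖x‖_q ≤ q · (Σ a_{i,j}²)^{1/2}`. -/
theorem double_rademacher_Lq_bound (N : ℕ) (a : ℕ → ℕ → ℝ) (q : ℝ) (hq : 1 ≤ q) :
    (∫ s in Set.Icc (0:ℝ) 1, ∫ t in Set.Icc (0:ℝ) 1,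
        |∑ i ∈ Finset.Icc 1 N, ∑ j ∈ Finset.Icc 1 N, a i j * rad i s * rad j t| ^ q) ^ (1/q)
      ≤ q * Real.sqrt (∑ i ∈ Finset.Icc 1 N, ∑ j ∈ Finset.Icc 1 N, (a i j) ^ 2) := by
  obtain ⟨m, hm, hqm, hmq⟩ := exists_nat_ne_zero_half_le_le hq
  rw [integral_integral_rademacher_eq_expect N (|·| ^ q), ← expect_product', one_div]
  refine le_trans ?_ (mul_le_mul_of_nonneg_right hmq (sqrt_nonneg _))
  refine Real.expect_abs_rpow_rpow_inv_le_of_pow_le _ (by linarith) (by linarith) (by positivity) ?_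
  exact (expect_product' _ _ _).trans_le (expect_expect_dyadicSign_bilinear_pow_le N a hm)
end

section
/- Let x_k and x be measurable functions (on a finite measure space) with distribution functions n_{x_k}(z) = μ{|x_k| > z} and n_x(z) = μ{|x| > z}. If n_{x_k}(z) → n_x(z) for every z > 0 as k → ∞, then the decreasing left-continuous rearrangements satisfy x_k*(t) → x*(t) at every point t where x* is continuous. -/
open MeasureTheory Filter

/-- Distribution function `n_f(z) = μ{ω : |f ω| > z}`. -/
noncomputable def distrib {α : Type*} [MeasurableSpace α] (μ : Measure α)
    (f : α → ℝ) (z : ℝ) : ENNReal :=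
  μ {ω | z < |f ω|}

/-- Decreasing left-continuous rearrangement `f*(t) = inf{z > 0 : n_f(z) < t}`. -/
noncomputable def rearr {α : Type*} [MeasurableSpace α] (μ : Measure α)
    (f : α → ℝ) (t : ℝ) : ℝ :=
  sInf {z : ℝ | 0 < z ∧ distrib μ f z < ENNReal.ofReal t}

/-!
Write `S_f(t) = {z > 0 : n_f(z) < t}`, so that `f*(t) = inf S_f(t)` and, `n_f` being
antitone, `S_f(t)` is an up-ray. If `x*(t) < b`, pick `x*(t) < z < b`: then `n_x(z) < t`, hence
eventually `n_{x_k}(z) < t` and `x_k*(t) ≤ z`. If `a < x*(t)`, continuity of `x*` gives `t' > t`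
with `a < x*(t')`; for `a < z < x*(t')` we get `n_x(z) ≥ t' > t`, hence eventually
`n_{x_k}(z) > t` and `z ≤ x_k*(t)`; this last step needs `S_{x_k}(t) ≠ ∅`, which holds
eventually because `S_x(t) ≠ ∅` for `t > 0`, as `n_x(z) → 0` when `z → ∞`.
-/

open Topology

section Rearrangement

variable {α : Type*} [MeasurableSpace α] {μ : Measure α} {f : α → ℝ} {t z : ℝ}

lemma distrib_antitone (μ : Measure α) (f : α → ℝ) : Antitone (distrib μ f) :=
  fun _ _ hab => measure_mono fun _ hω => lt_of_le_of_lt hab hω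

lemma rearr_nonneg (μ : Measure α) (f : α → ℝ) (t : ℝ) : 0 ≤ rearr μ f t :=
  Real.sInf_nonneg fun _ hz => hz.1.le

lemma rearr_of_nonpos (μ : Measure α) (f : α → ℝ) (ht : t ≤ 0) : rearr μ f t = 0 := by
  have : {z : ℝ | 0 < z ∧ distrib μ f z < ENNReal.ofReal t} = ∅ := by
    simp [ENNReal.ofReal_eq_zero.2 ht]
  rw [rearr, this, Real.sInf_empty]

lemma tendsto_distrib_atTop (μ : Measure α) [IsFiniteMeasure μ] (hf : Measurable f) :
    Tendsto (distrib μ f) atTop (𝓝 0) := by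
  have hempty : ⋂ z : ℝ, {ω | z < |f ω|} = ∅ :=
    Set.iInter_eq_empty_iff.2 fun ω => ⟨|f ω|, lt_irrefl (|f ω|)⟩
  have h := tendsto_measure_iInter_atTop (μ := μ) (s := fun z : ℝ => {ω | z < |f ω|})
    (fun z => (measurableSet_lt measurable_const hf.abs).nullMeasurableSet)
    (fun _ _ hab _ hω => lt_of_le_of_lt hab hω) ⟨0, measure_ne_top μ _⟩
  rwa [hempty, measure_empty] at h

lemma exists_distrib_lt (μ : Measure α) [IsFiniteMeasure μ] (hf : Measurable f) (ht : 0 < t) :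
    ∃ z, 0 < z ∧ distrib μ f z < ENNReal.ofReal t := by
  obtain ⟨z, hz⟩ := ((tendsto_distrib_atTop μ hf).eventually_lt_const
    (ENNReal.ofReal_pos.2 ht) |>.and (eventually_gt_atTop 0)).exists
  exact ⟨z, hz.2, hz.1⟩

lemma rearr_le_of_distrib_lt (hz : 0 < z) (h : distrib μ f z < ENNReal.ofReal t) :
    rearr μ f t ≤ z :=
  csInf_le ⟨0, fun _ hw => hw.1.le⟩ ⟨hz, h⟩

lemma le_distrib_of_lt_rearr (hz : 0 < z) (h : z < rearr μ f t) :
    ENNReal.ofReal t ≤ distrib μ f z :=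
  not_lt.1 fun h' => (rearr_le_of_distrib_lt hz h').not_gt h

lemma le_rearr_of_le_distrib (hne : ∃ w, 0 < w ∧ distrib μ f w < ENNReal.ofReal t)
    (h : ENNReal.ofReal t ≤ distrib μ f z) : z ≤ rearr μ f t :=
  le_csInf hne fun _ hw => not_lt.1 fun hwz =>
    (h.trans (distrib_antitone μ f hwz.le)).not_gt hw.2

lemma distrib_lt_of_rearr_lt (hne : ∃ w, 0 < w ∧ distrib μ f w < ENNReal.ofReal t)
    (h : rearr μ f t < z) : distrib μ f z < ENNReal.ofReal t := by
  obtain ⟨w, hw, hwz⟩ := (csInf_lt_iff ⟨0, fun _ hw => hw.1.le⟩ hne).1 h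
  exact (distrib_antitone μ f hwz.le).trans_lt hw.2

end Rearrangement

section Convergence

variable {α ι : Type*} [MeasurableSpace α] {μ : Measure α} {l : Filter ι} {x : ι → α → ℝ}
  {f : α → ℝ} {t : ℝ}

lemma eventually_rearr_lt
    (hconv : ∀ z, 0 < z → Tendsto (fun i => distrib μ (x i) z) l (𝓝 (distrib μ f z)))
    (hne : ∃ w, 0 < w ∧ distrib μ f w < ENNReal.ofReal t) {b : ℝ} (hb : rearr μ f t < b) :
    ∀ᶠ i in l, rearr μ (x i) t < b := by
  obtain ⟨z, hfz, hzb⟩ := exists_between hb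
  have hz : 0 < z := (rearr_nonneg μ f t).trans_lt hfz
  filter_upwards [(hconv z hz).eventually_lt_const (distrib_lt_of_rearr_lt hne hfz)] with i hi
  exact (rearr_le_of_distrib_lt hz hi).trans_lt hzb

lemma eventually_exists_distrib_lt
    (hconv : ∀ z, 0 < z → Tendsto (fun i => distrib μ (x i) z) l (𝓝 (distrib μ f z)))
    (hne : ∃ w, 0 < w ∧ distrib μ f w < ENNReal.ofReal t) :
    ∀ᶠ i in l, ∃ w, 0 < w ∧ distrib μ (x i) w < ENNReal.ofReal t := by
  obtain ⟨w, hw, hfw⟩ := hne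
  filter_upwards [(hconv w hw).eventually_lt_const hfw] with i hi
  exact ⟨w, hw, hi⟩

lemma eventually_lt_rearr
    (hconv : ∀ z, 0 < z → Tendsto (fun i => distrib μ (x i) z) l (𝓝 (distrib μ f z)))
    (hne : ∃ w, 0 < w ∧ distrib μ f w < ENNReal.ofReal t) {t' a : ℝ} (htt' : t < t')
    (ha : a < rearr μ f t') :
    ∀ᶠ i in l, a < rearr μ (x i) t := by
  rcases lt_or_ge a 0 with ha0 | ha0
  · exact .of_forall fun i => ha0.trans_le (rearr_nonneg μ (x i) t)
  obtain ⟨z, haz, hzf⟩ := exists_between ha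
  have hz : 0 < z := ha0.trans_lt haz
  have ht : 0 < t := by
    obtain ⟨w, -, hw⟩ := hne
    exact ENNReal.ofReal_pos.1 (pos_of_gt hw)
  have htz : ENNReal.ofReal t < distrib μ f z :=
    ((ENNReal.ofReal_lt_ofReal_iff (ht.trans htt')).2 htt').trans_le
      (le_distrib_of_lt_rearr hz hzf)
  filter_upwards [(hconv z hz).eventually_const_lt htz,
    eventually_exists_distrib_lt hconv hne] with i hi hnei
  exact haz.trans_le (le_rearr_of_le_distrib hnei hi.le)

end Convergence

theorem rearrangement_convergence_general {α : Type*} [MeasurableSpace α] (μ : Measure α)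
    [IsFiniteMeasure μ] (x : ℕ → α → ℝ) (xlim : α → ℝ)
    (hxlim : Measurable xlim)
    (hconv : ∀ z : ℝ, 0 < z →
      Tendsto (fun k => distrib μ (x k) z) atTop (nhds (distrib μ xlim z)))
    (t : ℝ) (ht : ContinuousAt (rearr μ xlim) t) :
    Tendsto (fun k => rearr μ (x k) t) atTop (nhds (rearr μ xlim t)) := by
  rcases le_or_gt t 0 with ht0 | ht0
  · simpa only [rearr_of_nonpos μ _ ht0] using tendsto_const_nhds
  have hne := exists_distrib_lt μ hxlim ht0
  refine tendsto_order.2 ⟨fun a ha => ?_, fun b hb => eventually_rearr_lt hconv hne hb⟩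
  obtain ⟨t', hat', htt'⟩ := ((ht.eventually (lt_mem_nhds ha)).filter_mono nhdsWithin_le_nhds
    |>.and (self_mem_nhdsWithin : Set.Ioi t ∈ 𝓝[>] t)).exists
  exact eventually_lt_rearr hconv hne htt' hat'

/-- If the distribution functions of `x k` converge pointwise (for every `z > 0`) to the
distribution function of `x`, then the rearrangements `x_k*` converge to `x*` at every
continuity point of `x*`. -/
theorem rearrangement_convergence {α : Type*} [MeasurableSpace α] (μ : Measure α)
    [IsFiniteMeasure μ] (x : ℕ → α → ℝ) (xlim : α → ℝ)
    (hx : ∀ k, Measurable (x k)) (hxlim : Measurable xlim)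
    (hconv : ∀ z : ℝ, 0 < z →
      Tendsto (fun k => distrib μ (x k) z) atTop (nhds (distrib μ xlim z)))
    (t : ℝ) (ht : ContinuousAt (rearr μ xlim) t) :
    Tendsto (fun k => rearr μ (x k) t) atTop (nhds (rearr μ xlim t)) :=
  rearrangement_convergence_general μ x xlim hxlim hconv t ht
end

section
/- Define L(z) = μ{(s,t) ∈ [0,1]² : ln(e/s)·ln(e/t) > z} where μ is two-dimensional Lebesgue measure. Then for every z ≥ 1, (1/2)·exp(−2√z + 2) ≤ L(z) ≤ 2·exp(−√z + 2). -/
open MeasureTheory Real Set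

/-- `L(z) = μ{(s,t) ∈ [0,1]² : ln(e/s)·ln(e/t) > z}` satisfies, for `z ≥ 1`,
`(1/2)·exp(−2√z+2) ≤ L(z) ≤ 2·exp(−√z+2)`. -/
theorem log_product_distribution_bounds (z : ℝ) (hz : 1 ≤ z) :
    (1/2) * Real.exp (-2 * Real.sqrt z + 2)
        ≤ (volume {p : ℝ × ℝ | p ∈ Set.Icc (0:ℝ) 1 ×ˢ Set.Icc (0:ℝ) 1 ∧
            z < Real.log (Real.exp 1 / p.1) * Real.log (Real.exp 1 / p.2)}).toReal ∧
    (volume {p : ℝ × ℝ | p ∈ Set.Icc (0:ℝ) 1 ×ˢ Set.Icc (0:ℝ) 1 ∧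
            z < Real.log (Real.exp 1 / p.1) * Real.log (Real.exp 1 / p.2)}).toReal
        ≤ 2 * Real.exp (-Real.sqrt z + 2) := by
  have hsz : 1 ≤ Real.sqrt z := by
    rw [show (1:ℝ) = Real.sqrt 1 by simp]
    exact Real.sqrt_le_sqrt hz
  have hlog2 : 0 < Real.log 2 := Real.log_pos (by norm_num)
  set a := Real.exp (1 - Real.sqrt z) with ha
  set b := Real.exp (1 - Real.sqrt z - Real.log 2) with hb
  have ha0 : 0 < a := Real.exp_pos _
  have hb0 : 0 < b := Real.exp_pos _
  have ha1 : a ≤ 1 := by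
    rw [ha]
    calc Real.exp (1 - Real.sqrt z) ≤ Real.exp 0 := Real.exp_le_exp.2 (by linarith)
      _ = 1 := Real.exp_zero
  have hb1 : b ≤ a := by
    rw [ha, hb]
    exact Real.exp_le_exp.2 (by linarith)
  set T := {p : ℝ × ℝ | p ∈ Set.Icc (0:ℝ) 1 ×ˢ Set.Icc (0:ℝ) 1 ∧
            z < Real.log (Real.exp 1 / p.1) * Real.log (Real.exp 1 / p.2)} with hT
  have hsub1 : Set.Ioc (0:ℝ) a ×ˢ Set.Ioc (0:ℝ) b ⊆ T := by
    rintro ⟨s, t⟩ ⟨⟨hs0, hsa⟩, ht0, htb⟩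
    refine ⟨⟨⟨le_of_lt hs0, hsa.trans ha1⟩, ⟨le_of_lt ht0, (htb.trans hb1).trans ha1⟩⟩, ?_⟩
    have hus : Real.sqrt z ≤ Real.log (Real.exp 1 / s) := by
      rw [Real.log_div (Real.exp_ne_zero 1) (ne_of_gt hs0), Real.log_exp]
      have h := Real.log_le_log hs0 hsa
      rw [ha, Real.log_exp] at h
      linarith
    have hut : Real.sqrt z + Real.log 2 ≤ Real.log (Real.exp 1 / t) := by
      rw [Real.log_div (Real.exp_ne_zero 1) (ne_of_gt ht0), Real.log_exp]
      have h := Real.log_le_log ht0 htb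
      rw [hb, Real.log_exp] at h
      linarith
    have hz0 : (0:ℝ) ≤ z := by linarith
    have hzz : Real.sqrt z * Real.sqrt z = z := Real.mul_self_sqrt hz0
    have h1 : Real.sqrt z * (Real.sqrt z + Real.log 2)
        ≤ Real.log (Real.exp 1 / s) * Real.log (Real.exp 1 / t) :=
      mul_le_mul hus hut (by linarith) (by linarith)
    nlinarith
  have hsub2 : T ⊆ (Set.Icc (0:ℝ) a ×ˢ Set.Icc (0:ℝ) 1)
      ∪ (Set.Icc (0:ℝ) 1 ×ˢ Set.Icc (0:ℝ) a) := by
    rintro ⟨s, t⟩ ⟨⟨⟨hs0, hs1⟩, ht0, ht1⟩, hzlt⟩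
    dsimp only at hzlt hs0 hs1 ht0 ht1
    rcases eq_or_lt_of_le hs0 with hs | hs
    · simp only [← hs, div_zero, Real.log_zero, zero_mul] at hzlt
      linarith
    rcases eq_or_lt_of_le ht0 with ht | ht
    · simp only [← ht, div_zero, Real.log_zero, mul_zero] at hzlt
      linarith
    have hus : Real.log (Real.exp 1 / s) = 1 - Real.log s := by
      rw [Real.log_div (Real.exp_ne_zero 1) (ne_of_gt hs), Real.log_exp]
    have hut : Real.log (Real.exp 1 / t) = 1 - Real.log t := by
      rw [Real.log_div (Real.exp_ne_zero 1) (ne_of_gt ht), Real.log_exp]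
    have hls : Real.log s ≤ 0 := Real.log_nonpos (le_of_lt hs) hs1
    have hlt : Real.log t ≤ 0 := Real.log_nonpos (le_of_lt ht) ht1
    have hz0 : (0:ℝ) ≤ z := by linarith
    have hzz : Real.sqrt z * Real.sqrt z = z := Real.mul_self_sqrt hz0
    by_cases hcase : Real.sqrt z < Real.log (Real.exp 1 / s)
    · left
      refine ⟨⟨hs0, ?_⟩, ht0, ht1⟩
      rw [hus] at hcase
      have : s < a := by
        rw [ha, ← Real.exp_log hs]
        exact Real.exp_lt_exp.2 (by linarith)
      linarith
    · right
      refine ⟨⟨hs0, hs1⟩, ht0, ?_⟩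
      push_neg at hcase
      have hvt : Real.sqrt z < Real.log (Real.exp 1 / t) := by
        by_contra hv
        push_neg at hv
        have hu0 : 0 ≤ Real.log (Real.exp 1 / s) := by rw [hus]; linarith
        have := mul_le_mul hcase hv (by rw [hut]; linarith) (by linarith)
        nlinarith
      rw [hut] at hvt
      have : t < a := by
        rw [ha, ← Real.exp_log ht]
        exact Real.exp_lt_exp.2 (by linarith)
      exact le_of_lt this
  have hcov : volume T ≤ ENNReal.ofReal (2 * a) := by
    calc volume T ≤ volume ((Set.Icc (0:ℝ) a ×ˢ Set.Icc (0:ℝ) 1)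
        ∪ (Set.Icc (0:ℝ) 1 ×ˢ Set.Icc (0:ℝ) a)) := measure_mono hsub2
      _ ≤ volume (Set.Icc (0:ℝ) a ×ˢ Set.Icc (0:ℝ) 1)
          + volume (Set.Icc (0:ℝ) 1 ×ˢ Set.Icc (0:ℝ) a) := measure_union_le _ _
      _ = ENNReal.ofReal a + ENNReal.ofReal a := by
          rw [Measure.volume_eq_prod, Measure.prod_prod, Measure.prod_prod]
          simp [Real.volume_Icc]
      _ = ENNReal.ofReal (2 * a) := by
          rw [← ENNReal.ofReal_add ha0.le ha0.le]; ring_nf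
  have hfin : volume T ≠ ⊤ := ne_top_of_le_ne_top ENNReal.ofReal_ne_top hcov
  constructor
  · have h1 : volume (Set.Ioc (0:ℝ) a ×ˢ Set.Ioc (0:ℝ) b) ≤ volume T := measure_mono hsub1
    have h2 := ENNReal.toReal_mono hfin h1
    have hrect : volume (Set.Ioc (0:ℝ) a ×ˢ Set.Ioc (0:ℝ) b)
        = ENNReal.ofReal a * ENNReal.ofReal b := by
      rw [Measure.volume_eq_prod, Measure.prod_prod, Real.volume_Ioc, Real.volume_Ioc]
      simp
    rw [hrect, ENNReal.toReal_mul, ENNReal.toReal_ofReal ha0.le,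
      ENNReal.toReal_ofReal hb0.le] at h2
    have hab : a * b = 1/2 * Real.exp (-2 * Real.sqrt z + 2) := by
      rw [ha, hb, ← Real.exp_add,
        show (1 - Real.sqrt z) + (1 - Real.sqrt z - Real.log 2)
          = (-2 * Real.sqrt z + 2) + (-Real.log 2) by ring,
        Real.exp_add, Real.exp_neg, Real.exp_log (by norm_num : (0:ℝ) < 2)]
      ring
    linarith
  · have hup := ENNReal.toReal_le_of_le_ofReal (by positivity) hcov
    have h2 : a ≤ Real.exp (-Real.sqrt z + 2) := by
      rw [ha]; exact Real.exp_le_exp.2 (by linarith)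
    linarith
end

section
/- There exists a constant C > 0 such that for all n ∈ ℕ, the average over all 2^{n²} sign arrangements θ = {θ_{i,j}} of the quantity φ_n(θ) = ‖Σ_{i,j=1}^n θ_{i,j} r_i(s) r_j(t)‖_{L^∞([0,1]²)} satisfies 2^{−n²} Σ_θ φ_n(θ) ≤ C·n^{3/2}. -/
open MeasureTheory Real Set

namespace SignChaosAux

/-- real sign of a boolean -/
def sgn (b : Bool) : ℝ := if b then 1 else -1

lemma abs_sgn (b : Bool) : |sgn b| = 1 := by cases b <;> norm_num [sgn]

variable {n : ℕ}

/-- the bilinear form at a sign-vector pair -/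
def g (θ : Fin n → Fin n → Bool) (p : (Fin n → Bool) × (Fin n → Bool)) : ℝ :=
  ∑ i, ∑ j, sgn (θ i j) * sgn (p.1 i) * sgn (p.2 j)

/-- Max of the bilinear form over all sign-vector pairs. -/
noncomputable def Mx (θ : Fin n → Fin n → Bool) : ℝ :=
  Finset.univ.sup' Finset.univ_nonempty (g θ)

lemma abs_sgn_mul (b : Bool) (x : ℝ) : |sgn b * x| = |x| := by
  rw [abs_mul, abs_sgn, one_mul]

lemma abs_eq_sgn_mul (x : ℝ) : |x| = sgn (decide (0 ≤ x)) * x := by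
  by_cases h : 0 ≤ x
  · simp [sgn, h, abs_of_nonneg h]
  · push_neg at h
    simp [sgn, not_le.mpr h, abs_of_neg h]

/-- Key pointwise bound: a bilinear form with coefficients in `[-1,1]` on each side
is bounded by the max over sign vertices. -/
lemma abs_bilin_le (θ : Fin n → Fin n → Bool) (a b : Fin n → ℝ)
    (ha : ∀ i, |a i| ≤ 1) (hb : ∀ j, |b j| ≤ 1) :
    |∑ i, ∑ j, sgn (θ i j) * a i * b j| ≤ Mx θ := by
  set c : Fin n → ℝ := fun i => ∑ j, sgn (θ i j) * b j with hc
  have h1 : ∑ i, ∑ j, sgn (θ i j) * a i * b j = ∑ i, a i * c i := by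
    refine Finset.sum_congr rfl fun i _ => ?_
    rw [hc, Finset.mul_sum]
    exact Finset.sum_congr rfl fun j _ => by ring
  set ε : Fin n → Bool := fun i => decide (0 ≤ c i) with hε
  have h2 : |∑ i, a i * c i| ≤ ∑ i, sgn (ε i) * c i := by
    calc |∑ i, a i * c i| ≤ ∑ i, |a i * c i| := Finset.abs_sum_le_sum_abs _ _
      _ ≤ ∑ i, |c i| := by
          refine Finset.sum_le_sum fun i _ => ?_
          rw [abs_mul]
          have := abs_nonneg (c i)
          nlinarith [ha i, abs_nonneg (a i)]
      _ = ∑ i, sgn (ε i) * c i :=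
          Finset.sum_congr rfl fun i _ => abs_eq_sgn_mul (c i)
  set d : Fin n → ℝ := fun j => ∑ i, sgn (θ i j) * sgn (ε i) with hd
  have h3 : ∑ i, sgn (ε i) * c i = ∑ j, d j * b j := by
    simp only [hc, hd, Finset.mul_sum, Finset.sum_mul]
    rw [Finset.sum_comm]
    exact Finset.sum_congr rfl fun j _ => Finset.sum_congr rfl fun i _ => by ring
  set δ : Fin n → Bool := fun j => decide (0 ≤ d j) with hδ
  have h4 : ∑ j, d j * b j ≤ ∑ j, sgn (δ j) * d j := by
    calc ∑ j, d j * b j ≤ ∑ j, |d j * b j| :=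
          Finset.sum_le_sum fun j _ => le_abs_self _
      _ ≤ ∑ j, |d j| := by
          refine Finset.sum_le_sum fun j _ => ?_
          rw [abs_mul]
          have := abs_nonneg (d j)
          nlinarith [hb j, abs_nonneg (b j)]
      _ = ∑ j, sgn (δ j) * d j :=
          Finset.sum_congr rfl fun j _ => abs_eq_sgn_mul (d j)
  have h5 : ∑ j, sgn (δ j) * d j = g θ (ε, δ) := by
    simp only [g, hd, Finset.mul_sum]
    rw [Finset.sum_comm]
    exact Finset.sum_congr rfl fun i _ => Finset.sum_congr rfl fun j _ => by ring
  have h6 : g θ (ε, δ) ≤ Mx θ := Finset.le_sup' (g θ) (Finset.mem_univ (ε, δ))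
  calc |∑ i, ∑ j, sgn (θ i j) * a i * b j| = |∑ i, a i * c i| := by rw [h1]
    _ ≤ ∑ i, sgn (ε i) * c i := h2
    _ = ∑ j, d j * b j := h3
    _ ≤ ∑ j, sgn (δ j) * d j := h4
    _ = g θ (ε, δ) := h5
    _ ≤ Mx θ := h6

lemma Mx_nonneg (θ : Fin n → Fin n → Bool) : 0 ≤ Mx θ := by
  have := abs_bilin_le θ (fun _ => 0) (fun _ => 0)
    (fun i => by norm_num) (fun j => by norm_num)
  simpa using this

lemma abs_rad_le (k : ℕ) (t : ℝ) : |rad k t| ≤ 1 := by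
  unfold rad
  rcases Real.sign_apply_eq (Real.sin (2 ^ (k - 1) * Real.pi * t)) with h | h | h <;>
    rw [h] <;> norm_num

lemma toReal_eLpNorm_le (θ : Fin n → Fin n → Bool) :
    (eLpNorm (fun p : ℝ × ℝ =>
        ∑ i : Fin n, ∑ j : Fin n,
          (if θ i j then (1:ℝ) else -1) * rad (i.val + 1) p.1 * rad (j.val + 1) p.2)
      ⊤ μsq).toReal ≤ Mx θ := by
  refine ENNReal.toReal_le_of_le_ofReal (Mx_nonneg θ) ?_
  have hb : ∀ᵐ (p : ℝ × ℝ) ∂μsq, ‖∑ i : Fin n, ∑ j : Fin n,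
      (if θ i j then (1:ℝ) else -1) * rad (i.val + 1) p.1 * rad (j.val + 1) p.2‖ ≤ Mx θ := by
    refine ae_of_all _ fun p => ?_
    rw [Real.norm_eq_abs]
    exact abs_bilin_le θ (fun i => rad (i.val + 1) p.1) (fun j => rad (j.val + 1) p.2)
      (fun i => abs_rad_le _ _) (fun j => abs_rad_le _ _)
  rw [eLpNorm_exponent_top]
  exact eLpNormEssSup_le_of_ae_bound hb

lemma sum_prod_fn {ι κ : Type*} [Fintype ι] [DecidableEq ι] [Fintype κ] (F : ι → κ → ℝ) :
    ∑ f : ι → κ, ∏ i, F i (f i) = ∏ i, ∑ b : κ, F i b := by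
  have key := Finset.sum_prod_piFinset (Finset.univ : Finset κ) F
  rw [Fintype.piFinset_univ] at key
  exact key

lemma sum_exp_g (l : ℝ) (p : (Fin n → Bool) × (Fin n → Bool)) :
    ∑ θ : Fin n → Fin n → Bool, Real.exp (l * g θ p)
      = (Real.exp l + Real.exp (-l)) ^ (n * n) := by
  have h1 : ∀ θ : Fin n → Fin n → Bool,
      Real.exp (l * g θ p)
        = ∏ i, ∏ j, Real.exp (l * (sgn (θ i j) * sgn (p.1 i) * sgn (p.2 j))) := by
    intro θ
    rw [g, Finset.mul_sum, Real.exp_sum]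
    refine Finset.prod_congr rfl fun i _ => ?_
    rw [Finset.mul_sum, Real.exp_sum]
  have h2 : ∀ (i j : Fin n),
      (Real.exp (l * (sgn true * sgn (p.1 i) * sgn (p.2 j)))
        + Real.exp (l * (sgn false * sgn (p.1 i) * sgn (p.2 j))))
      = Real.exp l + Real.exp (-l) := by
    intro i j
    have hs : ∀ b : Bool, sgn b = 1 ∨ sgn b = -1 := by
      intro b; cases b <;> simp [sgn]
    have ht : sgn true = (1:ℝ) := rfl
    have hf : sgn false = (-1:ℝ) := rfl
    rcases hs (p.1 i) with h | h <;> rcases hs (p.2 j) with h' | h' <;>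
      rw [ht, hf, h, h'] <;> norm_num <;> ring
  calc ∑ θ : Fin n → Fin n → Bool, Real.exp (l * g θ p)
      = ∑ θ : Fin n → Fin n → Bool,
          ∏ i, ∏ j, Real.exp (l * (sgn (θ i j) * sgn (p.1 i) * sgn (p.2 j))) :=
        Finset.sum_congr rfl fun θ _ => h1 θ
    _ = ∏ i, ∑ h : Fin n → Bool,
          ∏ j, Real.exp (l * (sgn (h j) * sgn (p.1 i) * sgn (p.2 j))) := by
        exact sum_prod_fn (ι := Fin n) (κ := Fin n → Bool)
          (fun i h => ∏ j, Real.exp (l * (sgn (h j) * sgn (p.1 i) * sgn (p.2 j))))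
    _ = ∏ i, ∏ j, ∑ b : Bool, Real.exp (l * (sgn b * sgn (p.1 i) * sgn (p.2 j))) := by
        refine Finset.prod_congr rfl fun i _ => ?_
        exact sum_prod_fn (ι := Fin n) (κ := Bool)
          (fun j b => Real.exp (l * (sgn b * sgn (p.1 i) * sgn (p.2 j))))
    _ = ∏ i : Fin n, ∏ j : Fin n, (Real.exp l + Real.exp (-l)) := by
        refine Finset.prod_congr rfl fun i _ => Finset.prod_congr rfl fun j _ => ?_
        rw [Fintype.sum_bool]
        exact h2 i j
    _ = (Real.exp l + Real.exp (-l)) ^ (n * n) := by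
        simp [Finset.prod_const, pow_mul]

lemma exp_mul_Mx_le (l : ℝ) (θ : Fin n → Fin n → Bool) :
    Real.exp (l * Mx θ)
      ≤ ∑ q : (Fin n → Bool) × (Fin n → Bool), Real.exp (l * g θ q) := by
  obtain ⟨q, -, hq⟩ := Finset.exists_mem_eq_sup'
    (Finset.univ_nonempty (α := (Fin n → Bool) × (Fin n → Bool))) (g θ)
  have hM : Mx θ = g θ q := hq
  rw [hM]
  exact Finset.single_le_sum
    (f := fun r : (Fin n → Bool) × (Fin n → Bool) => Real.exp (l * g θ r))
    (fun r _ => (Real.exp_pos _).le) (Finset.mem_univ q)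

end SignChaosAux

open SignChaosAux in
/-- The average over all `2^{n²}` sign arrangements `θ` of
`φ_n(θ) = ‖Σ_{i,j=1}^n θ_{i,j} r_i(s) r_j(t)‖_{L^∞([0,1]²)}` is at most `C·n^{3/2}`. -/
theorem average_sign_chaos_sup_norm_upper_bound :
    ∃ C : ℝ, 0 < C ∧ ∀ n : ℕ,
      ((2:ℝ) ^ (n ^ 2))⁻¹ *
        ∑ θ : Fin n → Fin n → Bool,
          (eLpNorm (fun p : ℝ × ℝ =>
              ∑ i : Fin n, ∑ j : Fin n,
                (if θ i j then (1:ℝ) else -1) * rad (i.val + 1) p.1 * rad (j.val + 1) p.2) ⊤ μsq).toReal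
      ≤ C * (n : ℝ) ^ ((3:ℝ)/2) := by
  refine ⟨2, by norm_num, fun n => ?_⟩
  rcases Nat.eq_zero_or_pos n with hn | hn
  · subst hn
    simp [Real.zero_rpow (by norm_num : ((3:ℝ)/2) ≠ 0)]
    rw [show (fun _ : ℝ × ℝ => (0:ℝ)) = 0 from rfl, eLpNormEssSup_zero]
    simp
  -- setup
  have hnR : (0:ℝ) < n := by exact_mod_cast hn
  have hsq : (0:ℝ) < Real.sqrt n := Real.sqrt_pos.mpr hnR
  set l : ℝ := (Real.sqrt n)⁻¹ with hl
  have hl0 : 0 < l := inv_pos.mpr hsq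
  have hl2 : l ^ 2 = (n : ℝ)⁻¹ := by
    rw [hl, inv_pow, Real.sq_sqrt hnR.le]
  have hN : ((2:ℝ) ^ (n ^ 2)) = (2:ℝ) ^ (n * n) := by rw [pow_two]
  have hcard : (Fintype.card (Fin n → Fin n → Bool) : ℝ) = 2 ^ (n * n) := by
    simp [Fintype.card_fun, pow_mul]
  have hNpos : (0:ℝ) < 2 ^ (n * n) := by positivity
  set A : ℝ := ((2:ℝ) ^ (n * n))⁻¹ * ∑ θ : Fin n → Fin n → Bool, Mx θ with hA
  -- step 1 : LHS ≤ A
  have step1 : ((2:ℝ) ^ (n ^ 2))⁻¹ *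
      ∑ θ : Fin n → Fin n → Bool,
        (eLpNorm (fun p : ℝ × ℝ =>
            ∑ i : Fin n, ∑ j : Fin n,
              (if θ i j then (1:ℝ) else -1) * rad (i.val + 1) p.1 * rad (j.val + 1) p.2) ⊤ μsq).toReal
      ≤ A := by
    rw [hN, hA]
    refine mul_le_mul_of_nonneg_left ?_ (by positivity)
    exact Finset.sum_le_sum fun θ _ => toReal_eLpNorm_le θ
  -- step 2 : Jensen
  have jensen : Real.exp (l * A)
      ≤ ((2:ℝ) ^ (n * n))⁻¹ * ∑ θ : Fin n → Fin n → Bool, Real.exp (l * Mx θ) := by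
    have hw : ∑ _θ : Fin n → Fin n → Bool, ((2:ℝ) ^ (n * n))⁻¹ = 1 := by
      rw [Finset.sum_const, Finset.card_univ, nsmul_eq_mul, hcard]
      field_simp
    have := convexOn_exp.map_sum_le (t := (Finset.univ : Finset (Fin n → Fin n → Bool)))
      (w := fun _ => ((2:ℝ) ^ (n * n))⁻¹) (p := fun θ => l * Mx θ)
      (fun _ _ => by positivity) hw (fun _ _ => Set.mem_univ _)
    have harg : ∑ θ : Fin n → Fin n → Bool, ((2:ℝ) ^ (n * n))⁻¹ • (l * Mx θ)
        = l * A := by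
      rw [hA, Finset.mul_sum, Finset.mul_sum]
      exact Finset.sum_congr rfl fun θ _ => by rw [smul_eq_mul]; ring
    rw [harg] at this
    refine this.trans_eq ?_
    rw [Finset.mul_sum]
    exact Finset.sum_congr rfl fun θ _ => by rw [smul_eq_mul]
  -- step 3 : moment bound
  have cosh_bound : Real.exp l + Real.exp (-l) ≤ 2 * Real.exp (l ^ 2 / 2) := by
    have := Real.cosh_le_exp_half_sq l
    rw [Real.cosh_eq] at this
    linarith
  have step3 : ((2:ℝ) ^ (n * n))⁻¹ * ∑ θ : Fin n → Fin n → Bool, Real.exp (l * Mx θ)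
      ≤ 2 ^ n * 2 ^ n * Real.exp (l ^ 2 / 2) ^ (n * n) := by
    have h1 : ∑ θ : Fin n → Fin n → Bool, Real.exp (l * Mx θ)
        ≤ ∑ θ : Fin n → Fin n → Bool,
            ∑ q : (Fin n → Bool) × (Fin n → Bool), Real.exp (l * g θ q) :=
      Finset.sum_le_sum fun θ _ => exp_mul_Mx_le l θ
    have h2 : ∑ θ : Fin n → Fin n → Bool,
          ∑ q : (Fin n → Bool) × (Fin n → Bool), Real.exp (l * g θ q)
        = 2 ^ n * 2 ^ n * (Real.exp l + Real.exp (-l)) ^ (n * n) := by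
      rw [Finset.sum_comm]
      have : ∀ q : (Fin n → Bool) × (Fin n → Bool),
          ∑ θ : Fin n → Fin n → Bool, Real.exp (l * g θ q)
            = (Real.exp l + Real.exp (-l)) ^ (n * n) := fun q => sum_exp_g l q
      rw [Finset.sum_congr rfl fun q _ => this q, Finset.sum_const, Finset.card_univ,
        nsmul_eq_mul]
      have : (Fintype.card ((Fin n → Bool) × (Fin n → Bool)) : ℝ) = 2 ^ n * 2 ^ n := by
        simp [Fintype.card_prod, Fintype.card_fun]
      rw [this]
    have h3 : (Real.exp l + Real.exp (-l)) ^ (n * n)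
        ≤ (2 * Real.exp (l ^ 2 / 2)) ^ (n * n) :=
      pow_le_pow_left₀ (by positivity) cosh_bound _
    calc ((2:ℝ) ^ (n * n))⁻¹ * ∑ θ : Fin n → Fin n → Bool, Real.exp (l * Mx θ)
        ≤ ((2:ℝ) ^ (n * n))⁻¹ * (2 ^ n * 2 ^ n * (2 * Real.exp (l ^ 2 / 2)) ^ (n * n)) := by
          refine mul_le_mul_of_nonneg_left ?_ (by positivity)
          refine (h1.trans_eq h2).trans ?_
          exact mul_le_mul_of_nonneg_left h3 (by positivity)
      _ = 2 ^ n * 2 ^ n * Real.exp (l ^ 2 / 2) ^ (n * n) := by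
          rw [mul_pow]
          field_simp
  -- combine
  have expA : Real.exp (l * A) ≤ 2 ^ n * 2 ^ n * Real.exp (l ^ 2 / 2) ^ (n * n) :=
    jensen.trans step3
  have hlogexp : l * A ≤ n * Real.log 2 + n * Real.log 2 + (n * n) * (l ^ 2 / 2) := by
    have hpos : (0:ℝ) < 2 ^ n * 2 ^ n * Real.exp (l ^ 2 / 2) ^ (n * n) := by positivity
    have := (Real.le_log_iff_exp_le hpos).mpr expA
    have hlog : Real.log (2 ^ n * 2 ^ n * Real.exp (l ^ 2 / 2) ^ (n * n))
        = n * Real.log 2 + n * Real.log 2 + (n * n) * (l ^ 2 / 2) := by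
      rw [Real.log_mul (by positivity) (by positivity),
        Real.log_mul (by positivity) (by positivity),
        Real.log_pow, Real.log_pow, Real.log_exp]
      push_cast
      ring
    linarith [hlog ▸ this]
  -- final arithmetic
  have hAle : A ≤ 2 * ((n:ℝ) * Real.sqrt n) := by
    have h1 : l * A ≤ 2 * n * Real.log 2 + n / 2 := by
      have : (n * n : ℝ) * (l ^ 2 / 2) = n / 2 := by
        rw [hl2]; field_simp
      linarith [hlogexp, this ▸ hlogexp]
    have hlog2 : Real.log 2 < 0.6931471808 := Real.log_two_lt_d9
    have h2 : l * A ≤ 2 * n := by nlinarith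
    have : A = Real.sqrt n * (l * A) := by
      rw [hl]; field_simp
    rw [this]
    calc Real.sqrt n * (l * A) ≤ Real.sqrt n * (2 * n) :=
          mul_le_mul_of_nonneg_left h2 hsq.le
      _ = 2 * ((n:ℝ) * Real.sqrt n) := by ring
  have hrpow : (n : ℝ) ^ ((3:ℝ)/2) = (n:ℝ) * Real.sqrt n := by
    rw [show ((3:ℝ)/2) = 1 + 1/2 by norm_num, Real.rpow_add hnR, Real.rpow_one,
      ← Real.sqrt_eq_rpow]
  rw [hrpow]
  exact step1.trans hAle
end

section
/- For every k = 0, 1, 2, …, there exists a sign arrangement θ = {θ_{i,j}}_{i,j=1}^{2^k}, θ_{i,j} = ±1 (constructed from the Walsh matrix of order 2^k), such that ‖Σ_{i,j=1}^{2^k} θ_{i,j} r_i(s) r_j(t)‖_{L^∞([0,1]²)} ≤ 2^{3k/2}. -/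
open MeasureTheory Real Set

open Matrix Finset

/-! The sign arrangement is the Walsh matrix `W v w = (-1)^⟨v, w⟩` indexed by binary digit vectors
(the paper's `θ_{i,j}` up to a bit-reversal permutation of the rows). Its columns are orthogonal,
`Wᵀ W = 2^k • 1`, so by Bessel `‖W y‖₂² = 2^k ‖y‖₂²`. For `x_i = r_i(s)`, `y_j = r_j(t)`, both
bounded by `1` in absolute value, Hölder (here Cauchy–Schwarz) gives
`|x ⬝ᵥ W y| ≤ ‖x‖₂ ‖W y‖₂ ≤ 2^(k/2) · 2^(k/2) · 2^(k/2)` at every point `(s, t)`. -/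

section BilinearBound

variable {ι κ : Type*} [Fintype ι] [Fintype κ] [DecidableEq κ]

theorem sq_dotProduct_le (x y : ι → ℝ) : (x ⬝ᵥ y) ^ 2 ≤ (x ⬝ᵥ x) * (y ⬝ᵥ y) := by
  simpa only [dotProduct, ← sq] using sum_mul_sq_le_sq_mul_sq univ x y

theorem dotProduct_self_le_card {x : ι → ℝ} (hx : ∀ i, |x i| ≤ 1) :
    x ⬝ᵥ x ≤ Fintype.card ι := by
  rw [Fintype.card_eq_sum_ones, Nat.cast_sum, Nat.cast_one]
  exact sum_le_sum fun i _ => by rw [← sq, sq_le_one_iff_abs_le_one]; exact hx i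

theorem mulVec_dotProduct_mulVec_of_transpose_mul_self {H : Matrix ι κ ℝ} {c : ℝ}
    (hH : Hᵀ * H = c • 1) (y : κ → ℝ) : H *ᵥ y ⬝ᵥ H *ᵥ y = c * (y ⬝ᵥ y) := by
  rw [dotProduct_mulVec, vecMul_mulVec, hH, ← dotProduct_mulVec, smul_mulVec, one_mulVec,
    dotProduct_smul, smul_eq_mul]

theorem abs_dotProduct_mulVec_le {H : Matrix ι κ ℝ} {c : ℝ} (hH : Hᵀ * H = c • 1)
    (hc : 0 ≤ c) {x : ι → ℝ} {y : κ → ℝ} (hx : ∀ i, |x i| ≤ 1) (hy : ∀ j, |y j| ≤ 1) :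
    |x ⬝ᵥ H *ᵥ y| ≤ √(Fintype.card ι * c * Fintype.card κ) := by
  apply Real.abs_le_sqrt
  calc (x ⬝ᵥ H *ᵥ y) ^ 2 ≤ (x ⬝ᵥ x) * (c * (y ⬝ᵥ y)) := by
        rw [← mulVec_dotProduct_mulVec_of_transpose_mul_self hH]; exact sq_dotProduct_le _ _
    _ ≤ Fintype.card ι * (c * Fintype.card κ) := by
        have hy₀ : 0 ≤ y ⬝ᵥ y := sum_nonneg fun j _ => mul_self_nonneg (y j)
        gcongr
        exacts [dotProduct_self_le_card hx, dotProduct_self_le_card hy]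
    _ = _ := by ring

end BilinearBound

noncomputable def walshMatrix (k : ℕ) : Matrix (Fin k → Fin 2) (Fin k → Fin 2) ℝ :=
  of fun v w => ∏ m, (-1) ^ ((v m : ℕ) * w m)

theorem walshMatrix_eq_one_or_neg_one (k : ℕ) (v w : Fin k → Fin 2) :
    walshMatrix k v w = 1 ∨ walshMatrix k v w = -1 := by
  rw [walshMatrix, of_apply, prod_pow_eq_pow_sum]
  exact neg_one_pow_eq_or ℝ _

theorem sum_neg_one_pow_mul_neg_one_pow (a a' : Fin 2) :
    ∑ b : Fin 2, (-1 : ℝ) ^ ((b : ℕ) * a) * (-1) ^ ((b : ℕ) * a') = if a = a' then 2 else 0 := by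
  fin_cases a <;> fin_cases a' <;> norm_num

theorem walshMatrix_transpose_mul_self (k : ℕ) :
    (walshMatrix k)ᵀ * walshMatrix k = (2 ^ k : ℝ) • 1 := by
  ext v v'
  simp only [mul_apply, transpose_apply, walshMatrix, of_apply, ← prod_mul_distrib]
  rw [← Fintype.prod_sum (fun m (b : Fin 2) => (-1 : ℝ) ^ ((b : ℕ) * v m) * (-1) ^ ((b : ℕ) * v' m))]
  simp only [sum_neg_one_pow_mul_neg_one_pow, Matrix.smul_apply, one_apply, smul_eq_mul]
  by_cases h : v = v'
  · simp [h]
  · obtain ⟨m, hm⟩ := Function.ne_iff.mp h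
    rw [if_neg h, mul_zero]
    exact prod_eq_zero (mem_univ m) (if_neg hm)

theorem sum_Icc_one_eq_sum_fin {M : Type*} [AddCommMonoid M] (f : ℕ → M) (n : ℕ) :
    ∑ i ∈ Icc 1 n, f i = ∑ a : Fin n, f (a + 1) := by
  rw [Fin.sum_univ_eq_sum_range (fun i => f (i + 1)), range_eq_Ico, sum_Ico_add']
  rfl

theorem Real.abs_sign_le_one (r : ℝ) : |Real.sign r| ≤ 1 := by
  rcases Real.sign_apply_eq r with h | h | h <;> simp [h]

theorem abs_rad_le_one (i : ℕ) (t : ℝ) : |rad i t| ≤ 1 :=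
  Real.abs_sign_le_one _

/-- For every `k` there is a sign arrangement `θ = {θ_{i,j}}_{i,j=1}^{2^k}` with
`‖Σ_{i,j=1}^{2^k} θ_{i,j} r_i(s) r_j(t)‖_{L^∞([0,1]²)} ≤ 2^{3k/2}`. -/
theorem exists_sign_chaos_small_sup_norm (k : ℕ) :
    ∃ θ : ℕ → ℕ → ℝ, (∀ i j, θ i j = 1 ∨ θ i j = -1) ∧
      eLpNorm (fun p : ℝ × ℝ =>
          ∑ i ∈ Finset.Icc 1 (2 ^ k), ∑ j ∈ Finset.Icc 1 (2 ^ k),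
            θ i j * rad i p.1 * rad j p.2) ⊤ μsq
        ≤ ENNReal.ofReal ((2:ℝ) ^ ((3 * (k:ℝ)) / 2)) := by
  let e : (Fin k → Fin 2) ≃ Fin (2 ^ k) := finFunctionFinEquiv
  let digits (i : ℕ) : Fin k → Fin 2 := e.symm (Fin.ofNat (2 ^ k) (i - 1))
  refine ⟨fun i j => walshMatrix k (digits i) (digits j),
    fun i j => walshMatrix_eq_one_or_neg_one k _ _, ?_⟩
  have hsqrt : √(2 ^ k * 2 ^ k * 2 ^ k : ℝ) = 2 ^ (3 * (k : ℝ) / 2) := by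
    rw [Real.sqrt_eq_rpow, ← Real.rpow_natCast, ← Real.rpow_add two_pos, ← Real.rpow_add two_pos,
      ← Real.rpow_mul zero_le_two]
    ring_nf
  have hbound (p : ℝ × ℝ) : ‖∑ i ∈ Icc 1 (2 ^ k), ∑ j ∈ Icc 1 (2 ^ k),
      walshMatrix k (digits i) (digits j) * rad i p.1 * rad j p.2‖ ≤ 2 ^ (3 * (k : ℝ) / 2) := by
    have hsum : ∑ i ∈ Icc 1 (2 ^ k), ∑ j ∈ Icc 1 (2 ^ k),
        walshMatrix k (digits i) (digits j) * rad i p.1 * rad j p.2 =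
        (fun v => rad (e v + 1) p.1) ⬝ᵥ walshMatrix k *ᵥ fun w => rad (e w + 1) p.2 := by
      simp only [sum_Icc_one_eq_sum_fin, dotProduct, mulVec, mul_sum, ← e.sum_comp]
      simp [digits, mul_comm, mul_left_comm]
    rw [Real.norm_eq_abs, hsum, ← hsqrt]
    simpa using abs_dotProduct_mulVec_le (walshMatrix_transpose_mul_self k) (by positivity)
      (fun v => abs_rad_le_one _ p.1) (fun w => abs_rad_le_one _ p.2)
  exact eLpNorm_exponent_top.trans_le (eLpNormEssSup_le_of_ae_bound (.of_forall hbound))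
end

section
/- For any real coefficients a_{i,j} (1 ≤ i,j ≤ n), ‖Σ_{i,j=1}^n a_{i,j} r_i(t) r_j(t)‖_{L^∞([0,1])} ≤ ‖Σ_{i,j=1}^n a_{i,j} r_i(s) r_j(t)‖_{L^∞([0,1]²)}. -/
/-!
The Rademacher functions `r_1, …, r_n` are constant on each open dyadic interval
`I = (m / 2^n, (m + 1) / 2^n)`. Almost every `t ∈ [0,1]` lies in such an `I ⊆ [0,1]`, and then
the undecoupled chaos at `t` equals the decoupled chaos at every point of the square `I × I`,
which has positive measure; so its modulus is at most the essential supremum over `[0,1]²`.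
-/

open MeasureTheory Real Set

theorem eLpNormEssSup_le_of_ae_exists_enorm_le {α β ε ε' : Type*} [MeasurableSpace α]
    [MeasurableSpace β] [ENorm ε] [ENorm ε'] {μ : Measure α} {ν : Measure β}
    {f : α → ε} {g : β → ε'}
    (h : ∀ᵐ x ∂μ, ∃ S : Set β, ν S ≠ 0 ∧ ∀ y ∈ S, ‖f x‖ₑ ≤ ‖g y‖ₑ) :
    eLpNormEssSup f μ ≤ eLpNormEssSup g ν := by
  refine essSup_le_of_ae_le _ ?_
  filter_upwards [h] with x ⟨S, hS, hfg⟩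
  by_contra! hlt
  have hsub : S ⊆ {y | eLpNormEssSup g ν < ‖g y‖ₑ} := fun y hy => hlt.trans_le (hfg y hy)
  exact hS (measure_mono_null hsub meas_eLpNormEssSup_lt)

def dyadicIoo (n m : ℕ) : Set ℝ := Ioo (m / 2 ^ n) ((m + 1) / 2 ^ n)

theorem mem_dyadicIoo {n m : ℕ} {t : ℝ} :
    t ∈ dyadicIoo n m ↔ (m : ℝ) < 2 ^ n * t ∧ 2 ^ n * t < m + 1 := by
  have h : (0 : ℝ) < 2 ^ n := by positivity
  rw [dyadicIoo, mem_Ioo, div_lt_iff₀' h, lt_div_iff₀' h]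

theorem dyadicIoo_subset_dyadicIoo {d n : ℕ} (hd : d ≤ n) (m : ℕ) :
    dyadicIoo n m ⊆ dyadicIoo d (m / 2 ^ (n - d)) := by
  intro t ht
  rw [mem_dyadicIoo] at ht ⊢
  set q := m / 2 ^ (n - d)
  have hpow : (2 : ℝ) ^ n = 2 ^ (n - d) * 2 ^ d := by rw [← pow_add, Nat.sub_add_cancel hd]
  have hq : ((q * 2 ^ (n - d) : ℕ) : ℝ) ≤ m := by exact_mod_cast Nat.div_mul_le_self m _
  have hq' : ((m + 1 : ℕ) : ℝ) ≤ (2 ^ (n - d) * (q + 1) : ℕ) := by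
    exact_mod_cast Nat.lt_mul_div_succ m (by positivity)
  push_cast at hq hq'
  rw [hpow, mul_assoc] at ht
  have h2 : (0 : ℝ) < 2 ^ (n - d) := by positivity
  constructor
  · exact lt_of_mul_lt_mul_left (by linarith [ht.1]) h2.le
  · exact lt_of_mul_lt_mul_left (by linarith [ht.2]) h2.le

theorem rad_eq_neg_one_pow {k m : ℕ} {t : ℝ} (ht : t ∈ dyadicIoo (k - 1) m) :
    rad k t = (-1) ^ m := by
  rw [mem_dyadicIoo] at ht
  set x := 2 ^ (k - 1) * t - m
  have hsin : sin (2 ^ (k - 1) * π * t) = (-1) ^ m * sin (π * x) := by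
    have harg : 2 ^ (k - 1) * π * t = m * π + π * x := by ring
    rw [harg, sin_add, sin_nat_mul_pi, cos_nat_mul_pi]
    ring
  have hpos : 0 < sin (π * x) :=
    sin_pos_of_pos_of_lt_pi (by nlinarith [pi_pos]) (by nlinarith [pi_pos])
  rw [rad, hsin]
  rcases neg_one_pow_eq_or ℝ m with h | h <;> rw [h]
  · rw [one_mul, Real.sign_of_pos hpos]
  · rw [neg_one_mul, Real.sign_of_neg (neg_neg_of_pos hpos)]

theorem rad_eq_rad_of_mem_dyadicIoo {k n m : ℕ} (hk : k ≤ n + 1) {s t : ℝ}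
    (hs : s ∈ dyadicIoo n m) (ht : t ∈ dyadicIoo n m) : rad k s = rad k t := by
  have hsub := dyadicIoo_subset_dyadicIoo (show k - 1 ≤ n by omega) m
  rw [rad_eq_neg_one_pow (hsub hs), rad_eq_neg_one_pow (hsub ht)]

theorem dyadicIoo_subset_Icc {n m : ℕ} (hm : m < 2 ^ n) : dyadicIoo n m ⊆ Icc 0 1 := by
  intro t ht
  rw [mem_dyadicIoo] at ht
  have hm' : (m : ℝ) + 1 ≤ 2 ^ n := by exact_mod_cast hm
  have h : (0 : ℝ) < 2 ^ n := by positivity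
  constructor <;> nlinarith

theorem volume_dyadicIoo_ne_zero (n m : ℕ) : volume (dyadicIoo n m) ≠ 0 := by
  rw [dyadicIoo, Real.volume_Ioo]
  simpa using div_lt_div_of_pos_right (lt_add_one (m : ℝ)) (by positivity : (0 : ℝ) < 2 ^ n)

theorem μsq_dyadicIoo_prod_ne_zero {n m : ℕ} (hm : m < 2 ^ n) :
    μsq (dyadicIoo n m ×ˢ dyadicIoo n m) ≠ 0 := by
  have hI : volume.restrict (Icc (0 : ℝ) 1) (dyadicIoo n m) ≠ 0 := by
    rw [Measure.restrict_eq_self _ (dyadicIoo_subset_Icc hm)]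
    exact volume_dyadicIoo_ne_zero n m
  rw [μsq, Measure.prod_prod]
  exact mul_ne_zero hI hI

theorem exists_mem_dyadicIoo (n : ℕ) {t : ℝ} (ht : t ∈ Icc 0 1)
    (hD : t ∉ range fun j : ℕ => (j : ℝ) / 2 ^ n) : ∃ m < 2 ^ n, t ∈ dyadicIoo n m := by
  have h : (0 : ℝ) < 2 ^ n := by positivity
  have hne : ∀ j : ℕ, (j : ℝ) ≠ 2 ^ n * t := fun j hj =>
    hD ⟨j, by simp only [hj, mul_div_cancel_left₀ _ h.ne']⟩
  refine ⟨⌊2 ^ n * t⌋₊, ?_, ?_⟩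
  · have h1 : t < 1 := ht.2.lt_of_ne fun h1 => hne (2 ^ n) (by simp [h1])
    have := Nat.floor_le (mul_nonneg h.le ht.1)
    exact_mod_cast this.trans_lt (mul_lt_of_lt_one_right h h1)
  · rw [mem_dyadicIoo]
    exact ⟨(Nat.floor_le (mul_nonneg h.le ht.1)).lt_of_ne (hne _), Nat.lt_floor_add_one _⟩

theorem ae_exists_mem_dyadicIoo (n : ℕ) :
    ∀ᵐ t ∂volume.restrict (Icc (0 : ℝ) 1), ∃ m < 2 ^ n, t ∈ dyadicIoo n m := by
  have hD : ∀ᵐ t ∂volume.restrict (Icc (0 : ℝ) 1), t ∉ range fun j : ℕ => (j : ℝ) / 2 ^ n :=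
    ae_restrict_of_ae ((countable_range _).ae_notMem volume)
  filter_upwards [ae_restrict_mem measurableSet_Icc, hD] with t ht htD
  exact exists_mem_dyadicIoo n ht htD

/-- The sup-norm of the undecoupled chaos is dominated by that of the decoupled chaos:
`‖Σ a_{i,j} r_i(t) r_j(t)‖_{L^∞([0,1])} ≤ ‖Σ a_{i,j} r_i(s) r_j(t)‖_{L^∞([0,1]²)}`. -/
theorem undecoupled_sup_norm_le_decoupled (n : ℕ) (a : ℕ → ℕ → ℝ) :
    eLpNorm (fun t : ℝ =>
        ∑ i ∈ Finset.Icc 1 n, ∑ j ∈ Finset.Icc 1 n, a i j * rad i t * rad j t) ⊤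
      (volume.restrict (Set.Icc (0:ℝ) 1))
    ≤ eLpNorm (fun p : ℝ × ℝ =>
        ∑ i ∈ Finset.Icc 1 n, ∑ j ∈ Finset.Icc 1 n, a i j * rad i p.1 * rad j p.2) ⊤ μsq := by
  rw [eLpNorm_exponent_top, eLpNorm_exponent_top]
  refine eLpNormEssSup_le_of_ae_exists_enorm_le ?_
  filter_upwards [ae_exists_mem_dyadicIoo n] with t ⟨m, hm, ht⟩
  refine ⟨dyadicIoo n m ×ˢ dyadicIoo n m, μsq_dyadicIoo_prod_ne_zero hm,
    fun p ⟨hs, hu⟩ => le_of_eq ?_⟩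
  congr 1
  refine Finset.sum_congr rfl fun i hi => Finset.sum_congr rfl fun j hj => ?_
  rw [Finset.mem_Icc] at hi hj
  rw [rad_eq_rad_of_mem_dyadicIoo (by omega) ht hs, rad_eq_rad_of_mem_dyadicIoo (by omega) ht hu]
end
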